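/- arXiv:2604.27758 — 2 statements merged into one kernel-verified Lean document; each statement's English description precedes it below -/
import Mathlib

section
/- For every nonnegative integer τ, every real υ, and every positive polynomial q of degree 2m, there is a constant C > 0 such that the τ-th derivative of ρ_υ(x) = (q(x))^(−υ/(2m)) satisfies |ρ_υ^(τ)(x)| ≤ C·(1+x²)^(−(υ+τ)/2) for all real x. -/
/-!
Induction on `τ` shows that the `τ`-th derivative of `q ^ α` is `q ^ (α - τ) * P` for a polynomial
`P` of degree at most `(2m - 1) τ`. The quotient `q / (1 + x²) ^ m` is continuous, positive and
tends to the leading coefficient of `q` at `±∞`, so each of its real powers is bounded; hence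
`q ^ (α - τ) ≲ (1 + x²) ^ (m (α - τ))`. Likewise `P² / (1 + x²) ^ ((2m - 1) τ)` is a rational
function without poles whose degree is not positive, so `|P| ≲ (1 + x²) ^ ((2m - 1) τ / 2)`. With
`α = -υ / (2m)` the two exponents add up to `-(υ + τ) / 2`.
-/

open Real Polynomial Asymptotics Bornology Set

namespace Polynomial

noncomputable def iteratedDerivRpowNumerator (q : ℝ[X]) (α : ℝ) : ℕ → ℝ[X]
  | 0 => 1
  | n + 1 => C (α - n) * derivative q * iteratedDerivRpowNumerator q α n +
      q * derivative (iteratedDerivRpowNumerator q α n)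

theorem natDegree_iteratedDerivRpowNumerator_le (q : ℝ[X]) (α : ℝ) (n : ℕ) :
    (iteratedDerivRpowNumerator q α n).natDegree ≤ (q.natDegree - 1) * n := by
  induction n with
  | zero => simp [iteratedDerivRpowNumerator]
  | succ n ih =>
    rw [iteratedDerivRpowNumerator, Nat.mul_succ]
    set P := iteratedDerivRpowNumerator q α n
    refine natDegree_add_le_of_degree_le ?_ ?_
    · calc (C (α - n) * derivative q * P).natDegree
          ≤ (derivative q).natDegree + P.natDegree := by
            rw [mul_assoc]; exact (natDegree_C_mul_le _ _).trans natDegree_mul_le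
        _ ≤ _ := by have := natDegree_derivative_le q; omega
    · by_cases hP : P.natDegree = 0
      · simp [derivative_of_natDegree_zero hP]
      · calc (q * derivative P).natDegree ≤ q.natDegree + (derivative P).natDegree :=
              natDegree_mul_le
          _ ≤ _ := by have := natDegree_derivative_le P; omega

theorem iteratedDeriv_eval_rpow {q : ℝ[X]} (hq : ∀ x, q.eval x ≠ 0) (α : ℝ) (n : ℕ) :
    iteratedDeriv n (fun x => q.eval x ^ α) =
      fun x => q.eval x ^ (α - n) * (iteratedDerivRpowNumerator q α n).eval x := by
  induction n with
  | zero => simp [iteratedDerivRpowNumerator]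
  | succ n ih =>
    ext x
    set P := iteratedDerivRpowNumerator q α n
    have hderiv : HasDerivAt (fun x => q.eval x ^ (α - n) * P.eval x)
        (q.derivative.eval x * (α - n) * q.eval x ^ (α - n - 1) * P.eval x +
          q.eval x ^ (α - n) * P.derivative.eval x) x :=
      ((q.hasDerivAt x).rpow_const (Or.inl (hq x))).mul (P.hasDerivAt x)
    have hsplit : q.eval x ^ (α - n) = q.eval x ^ (α - n - 1) * q.eval x := by
      rw [← rpow_add_one (hq x), sub_add_cancel]
    rw [iteratedDeriv_succ, ih, hderiv.deriv, iteratedDerivRpowNumerator, Nat.cast_succ, ← sub_sub,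
      hsplit]
    simp only [eval_add, eval_mul, eval_C]
    ring

lemma natDegree_one_add_X_sq_pow (k : ℕ) : ((1 + X ^ 2 : ℝ[X]) ^ k).natDegree = 2 * k := by
  rw [natDegree_pow, (by compute_degree! : (1 + X ^ 2 : ℝ[X]).natDegree = 2), mul_comm]

lemma monic_one_add_X_sq_pow (k : ℕ) : ((1 + X ^ 2 : ℝ[X]) ^ k).Monic := by
  monicity!

theorem isBounded_range_eval_div_eval {P Q : ℝ[X]} (hdeg : P.degree ≤ Q.degree)
    (hQ : ∀ x, Q.eval x ≠ 0) : IsBounded (range fun x => P.eval x / Q.eval x) :=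
  ((P.continuous.div Q.continuous hQ).isBounded_range_iff_isBigO_atTop_atBot).2
    ⟨(isBigO_one_iff ℝ).2 (div_isBoundedUnder_of_isBigO (isBigO_atTop_of_degree_le P Q hdeg)),
      (isBigO_one_iff ℝ).2 (div_isBoundedUnder_of_isBigO (isBigO_atBot_of_degree_le P Q hdeg))⟩

theorem exists_abs_eval_le_mul_one_add_sq_rpow (p : ℝ[X]) {d : ℕ} (hd : p.natDegree ≤ d) :
    ∃ C > 0, ∀ x : ℝ, |p.eval x| ≤ C * (1 + x ^ 2) ^ ((d : ℝ) / 2) := by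
  have hdeg : (p ^ 2).degree ≤ ((1 + X ^ 2 : ℝ[X]) ^ d).degree := by
    rw [degree_eq_natDegree (monic_one_add_X_sq_pow d).ne_zero, natDegree_one_add_X_sq_pow]
    exact degree_le_of_natDegree_le (natDegree_pow_le.trans (by omega))
  have hQ : ∀ x : ℝ, ((1 + X ^ 2 : ℝ[X]) ^ d).eval x ≠ 0 := fun x => by
    simpa using (by positivity : (0 : ℝ) < (1 + x ^ 2) ^ d).ne'
  obtain ⟨C, hC, hbound⟩ := (isBounded_range_eval_div_eval hdeg hQ).exists_pos_norm_le
  refine ⟨√C, by positivity, fun x => ?_⟩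
  have hA : (0 : ℝ) < (1 + x ^ 2) ^ d := by positivity
  have hsq : p.eval x ^ 2 ≤ C * (1 + x ^ 2) ^ d := by
    have := hbound _ ⟨x, rfl⟩
    simp only [eval_pow, eval_add, eval_one, eval_X, norm_div, norm_pow, Real.norm_eq_abs,
      sq_abs, abs_of_pos (by positivity : (0 : ℝ) < 1 + x ^ 2)] at this
    rwa [div_le_iff₀ hA] at this
  have hroot : √((1 + x ^ 2) ^ d) = (1 + x ^ 2) ^ ((d : ℝ) / 2) := by
    rw [sqrt_eq_rpow, ← rpow_natCast, ← rpow_mul (by positivity)]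
    ring_nf
  calc |p.eval x| = √(p.eval x ^ 2) := (sqrt_sq_eq_abs _).symm
    _ ≤ √(C * (1 + x ^ 2) ^ d) := sqrt_le_sqrt hsq
    _ = √C * (1 + x ^ 2) ^ ((d : ℝ) / 2) := by rw [sqrt_mul hC.le, hroot]

theorem exists_eval_rpow_le_mul_one_add_sq_rpow {q : ℝ[X]} {m : ℕ} (hdeg : q.natDegree = 2 * m)
    (hpos : ∀ x, 0 < q.eval x) (β : ℝ) :
    ∃ K > 0, ∀ x : ℝ, q.eval x ^ β ≤ K * (1 + x ^ 2) ^ ((m : ℝ) * β) := by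
  set D : ℝ[X] := (1 + X ^ 2) ^ m
  have hD : ∀ x, D.eval x = (1 + x ^ 2) ^ m := by simp [D]
  have hD0 : ∀ x, 0 < D.eval x := fun x => by rw [hD]; positivity
  have hDmonic : D.Monic := monic_one_add_X_sq_pow m
  have hq0 : q ≠ 0 := fun h => by simpa [h] using hpos 0
  have hdegD : q.degree = D.degree := by
    rw [degree_eq_natDegree hq0, degree_eq_natDegree hDmonic.ne_zero, hdeg,
      natDegree_one_add_X_sq_pow]
  set g : ℝ → ℝ := fun x => q.eval x / D.eval x
  have hg : ∀ x, 0 < g x := fun x => div_pos (hpos x) (hD0 x)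
  have hgc : Continuous fun x => g x ^ β :=
    (q.continuous.div D.continuous fun x => (hD0 x).ne').rpow_const fun x => Or.inl (hg x).ne'
  have hlead : q.leadingCoeff / D.leadingCoeff ≠ 0 := by
    rw [hDmonic.leadingCoeff, div_one]
    exact leadingCoeff_ne_zero.2 hq0
  have htop := (div_tendsto_atTop_leadingCoeff_div_of_degree_eq q D hdegD).rpow_const
    (p := β) (Or.inl hlead)
  have hbot := (div_tendsto_atBot_leadingCoeff_div_of_degree_eq q D hdegD).rpow_const
    (p := β) (Or.inl hlead)
  obtain ⟨K, hK, hbound⟩ := (hgc.isBounded_range_iff_isBigO_atTop_atBot.2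
    ⟨htop.isBigO_one ℝ, hbot.isBigO_one ℝ⟩).exists_pos_norm_le
  refine ⟨K, hK, fun x => ?_⟩
  have hgK : g x ^ β ≤ K := (le_abs_self _).trans (hbound _ ⟨x, rfl⟩)
  have hsplit : q.eval x ^ β = g x ^ β * (1 + x ^ 2) ^ ((m : ℝ) * β) := by
    rw [rpow_mul (by positivity), rpow_natCast, ← hD, ← mul_rpow (hg x).le (hD0 x).le]
    exact congrArg (· ^ β) (div_mul_cancel₀ _ (hD0 x).ne').symm
  rw [hsplit]
  exact mul_le_mul_of_nonneg_right hgK (by positivity)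

end Polynomial

theorem stmt_1 (τ : ℕ) (υ : ℝ) (m : ℕ) (hm : 1 ≤ m) (q : Polynomial ℝ)
    (hdeg : q.natDegree = 2 * m) (hpos : ∀ x : ℝ, 0 < q.eval x) :
    ∃ C : ℝ, 0 < C ∧ ∀ x : ℝ,
      |iteratedDeriv τ (fun x => (q.eval x) ^ (-υ / (2 * m))) x| ≤
        C * (1 + x ^ 2) ^ (-(υ + τ) / 2) := by
  set α := -υ / (2 * m)
  set P := iteratedDerivRpowNumerator q α τ
  obtain ⟨K, hK, hqK⟩ := exists_eval_rpow_le_mul_one_add_sq_rpow hdeg hpos (α - τ)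
  obtain ⟨M, hM, hPM⟩ :=
    P.exists_abs_eval_le_mul_one_add_sq_rpow (natDegree_iteratedDerivRpowNumerator_le q α τ)
  refine ⟨K * M, by positivity, fun x => ?_⟩
  have hexp : (m : ℝ) * (α - τ) + (((q.natDegree - 1) * τ : ℕ) : ℝ) / 2 = -(υ + τ) / 2 := by
    have hm0 : (m : ℝ) ≠ 0 := Nat.cast_ne_zero.2 (by omega)
    rw [hdeg, Nat.cast_mul, Nat.cast_sub (by omega)]
    push_cast
    simp only [α]
    field_simp
    ring
  rw [iteratedDeriv_eval_rpow (fun x => (hpos x).ne') α τ, abs_mul,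
    abs_of_pos (rpow_pos_of_pos (hpos x) _)]
  calc q.eval x ^ (α - τ) * |P.eval x|
      ≤ K * (1 + x ^ 2) ^ ((m : ℝ) * (α - τ)) *
          (M * (1 + x ^ 2) ^ ((((q.natDegree - 1) * τ : ℕ) : ℝ) / 2)) :=
        mul_le_mul (hqK x) (hPM x) (abs_nonneg _) (by positivity)
    _ = K * M * (1 + x ^ 2) ^ (-(υ + τ) / 2) := by
        rw [← hexp, rpow_add (by positivity)]
        ring
end

section
/- Let n ∈ ℕ, let υ be an even positive integer with υ ≤ 2n, and let m be a nonnegative integer with m ≤ υ − 2. Then the Möbius-transformed trapezoidal rule is exact for the monomial x^m against the weight ω_υ: ∫_ℝ x^m (1+x²)^(−υ/2) dx = (2π/n)·Σ_{j=1}^n φ(θ_j)^m · (1+φ(θ_j)²)^(−υ/2) · φ'(θ_j), where φ(θ) = −cot(θ/2), φ'(θ) = 1/(2 sin²(θ/2)), and θ_j = 2πj/n − π/n. -/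
open Real MeasureTheory

/-!
The substitution `x = -cot (θ / 2)` maps `(0, 2π)` onto `ℝ`, and since `1 + cot² = 1 / sin²` it
turns `x ^ m (1 + x²) ^ (-υ/2) dx` into `(-1) ^ m / 2 · cos (θ/2) ^ m sin (θ/2) ^ (υ - m - 2) dθ`.
Writing `cos (θ/2)` and `sin (θ/2)` through `e^{iθ/2}`, a product `cos (θ/2) ^ a sin (θ/2) ^ b`
with `a + b = 2c` is `e^{-icθ} P(e^{iθ})` for a polynomial `P` of degree `≤ 2c`, i.e. a
trigonometric polynomial of degree `c = υ/2 - 1 < n`. The `n`-point midpoint rule on `[0, 2π]`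
integrates `e^{ilθ}` exactly when `|l| < n`: for `l ≠ 0` both sides vanish, the sum over the
nodes being a geometric sum of a nontrivial `n`-th root of unity.
-/

/-- The paper's node `θ_{j+1}`: the midpoint of the `(j+1)`-st of `n` equal subintervals of
`[0, 2π]`. -/
noncomputable def midpointNode (n j : ℕ) : ℝ := 2 * π * (j + 1) / n - π / n

theorem midpointNode_mem_Ioo {n j : ℕ} (hj : j < n) : midpointNode n j ∈ Set.Ioo 0 (2 * π) := by
  have hn : (0 : ℝ) < n := by exact_mod_cast (Nat.zero_le j).trans_lt hj
  have hjn : (j : ℝ) + 1 ≤ n := by exact_mod_cast hj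
  rw [midpointNode, show 2 * π * (j + 1) / n - π / n = π * (2 * j + 1) / n by ring]
  constructor
  · positivity
  · rw [div_lt_iff₀ hn]
    nlinarith [pi_pos]

section ComplexExponential

open Complex Polynomial

theorem sum_exp_int_mul_midpointNode_eq_zero {n : ℕ} {l : ℤ} (hl : ¬ (n : ℤ) ∣ l) :
    ∑ j ∈ Finset.range n, exp (l * midpointNode n j * I) = 0 := by
  obtain rfl | hn := eq_or_ne n 0
  · simp
  set ω := exp (2 * π * l / n * I)
  have hω : ω ≠ 1 := by
    rw [Ne, Complex.exp_eq_one_iff]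
    rintro ⟨k, hk⟩
    refine hl ⟨k, ?_⟩
    field_simp at hk
    exact_mod_cast hk
  have hωn : ω ^ n = 1 := by
    rw [← Complex.exp_nat_mul, ← Complex.exp_int_mul_two_pi_mul_I l]
    congr 1
    field_simp
  have hterm (j : ℕ) : exp (l * midpointNode n j * I) = exp (π * l / n * I) * ω ^ j := by
    rw [← Complex.exp_nat_mul, ← Complex.exp_add, midpointNode]
    congr 1
    push_cast
    field_simp
    ring
  simp only [hterm, ← Finset.mul_sum, geom_sum_eq hω, hωn, sub_self, zero_div, mul_zero]

theorem integral_exp_int_mul_I_eq_zero {l : ℤ} (hl : l ≠ 0) :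
    ∫ θ in (0 : ℝ)..2 * π, exp (l * θ * I) = 0 := by
  have hc : (l : ℂ) * I ≠ 0 := mul_ne_zero (Int.cast_ne_zero.mpr hl) I_ne_zero
  simp_rw [mul_right_comm _ _ I]
  rw [integral_exp_mul_complex hc]
  push_cast
  rw [show (l : ℂ) * I * (2 * π) = l * (2 * π * I) by ring, exp_int_mul_two_pi_mul_I]
  simp

theorem integral_exp_int_mul_I_eq_midpoint {n : ℕ} {l : ℤ} (hln : l.natAbs < n) :
    ∫ θ in (0 : ℝ)..2 * π, exp (l * θ * I) =
      2 * π / n * ∑ j ∈ Finset.range n, exp (l * midpointNode n j * I) := by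
  obtain rfl | hl := eq_or_ne l 0
  · have hn : (n : ℂ) ≠ 0 := by norm_cast; omega
    simp [field]
  have hdvd : ¬ (n : ℤ) ∣ l := fun h => by
    have := Int.natAbs_le_of_dvd_ne_zero h hl
    omega
  rw [integral_exp_int_mul_I_eq_zero hl, sum_exp_int_mul_midpointNode_eq_zero hdvd, mul_zero]

theorem integral_sum_exp_eq_midpoint {ι : Type*} {n : ℕ} (s : Finset ι) (a : ι → ℂ) (ℓ : ι → ℤ)
    (hℓ : ∀ i ∈ s, (ℓ i).natAbs < n) :
    ∫ θ in (0 : ℝ)..2 * π, ∑ i ∈ s, a i * exp (ℓ i * θ * I) =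
      2 * π / n * ∑ j ∈ Finset.range n, ∑ i ∈ s, a i * exp (ℓ i * midpointNode n j * I) := by
  rw [intervalIntegral.integral_finsetSum fun i _ => by
    apply Continuous.intervalIntegrable; fun_prop]
  simp_rw [intervalIntegral.integral_const_mul]
  rw [Finset.sum_comm, Finset.mul_sum]
  refine Finset.sum_congr rfl fun i hi => ?_
  rw [integral_exp_int_mul_I_eq_midpoint (hℓ i hi), ← Finset.mul_sum, mul_left_comm]

theorem integral_exp_mul_eval_eq_midpoint {n c : ℕ} (P : ℂ[X]) (hP : P.natDegree ≤ 2 * c)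
    (hc : c < n) :
    ∫ θ in (0 : ℝ)..2 * π, exp (-(c * θ * I)) * P.eval (exp (θ * I)) =
      2 * π / n * ∑ j ∈ Finset.range n,
        exp (-(c * midpointNode n j * I)) * P.eval (exp (midpointNode n j * I)) := by
  have hexpand (θ : ℝ) : exp (-(c * θ * I)) * P.eval (exp (θ * I)) =
      ∑ k ∈ Finset.range (2 * c + 1), P.coeff k * exp (((k : ℤ) - c : ℤ) * θ * I) := by
    rw [eval_eq_sum_range' (Nat.lt_succ_of_le hP), Finset.mul_sum]
    refine Finset.sum_congr rfl fun k _ => ?_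
    rw [← Complex.exp_nat_mul, mul_left_comm, ← Complex.exp_add]
    push_cast
    ring_nf
  simp_rw [hexpand]
  exact integral_sum_exp_eq_midpoint _ _ _ fun k hk => by
    simp only [Finset.mem_range] at hk
    omega

theorem cos_half_pow_mul_sin_half_pow_eq {a b c : ℕ} (habc : a + b = 2 * c) (z : ℂ) :
    2 ^ a * (2 * I) ^ b * (cos (z / 2) ^ a * sin (z / 2) ^ b) =
      exp (-(c * z * I)) * ((X + 1) ^ a * (X - 1) ^ b : ℂ[X]).eval (exp (z * I)) := by
  have hinv : exp (-(z / 2) * I) = (exp (z / 2 * I))⁻¹ := by rw [← Complex.exp_neg]; ring_nf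
  have hsq : exp (z * I) = exp (z / 2 * I) ^ 2 := by rw [← Complex.exp_nat_mul]; ring_nf
  have hcos : 2 * cos (z / 2) = (exp (z / 2 * I))⁻¹ * (exp (z * I) + 1) := by
    rw [two_cos, hinv, hsq]; field_simp
  have hsin : 2 * I * sin (z / 2) = (exp (z / 2 * I))⁻¹ * (exp (z * I) - 1) := by
    rw [mul_right_comm, two_sin, hinv, hsq]; field_simp; ring_nf; rw [I_sq]; ring
  have hpow : exp (-(c * z * I)) = (exp (z / 2 * I))⁻¹ ^ (a + b) := by
    rw [habc, ← hinv, ← Complex.exp_nat_mul]; push_cast; ring_nf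
  calc 2 ^ a * (2 * I) ^ b * (cos (z / 2) ^ a * sin (z / 2) ^ b)
      = (2 * cos (z / 2)) ^ a * (2 * I * sin (z / 2)) ^ b := by ring
    _ = _ := by
      rw [hcos, hsin, hpow, eval_mul, eval_pow, eval_pow, eval_add, eval_sub, eval_X, eval_one,
        mul_pow, mul_pow]
      ring

end ComplexExponential

theorem integral_cos_half_pow_mul_sin_half_pow_eq_midpoint {n a b c : ℕ} (habc : a + b = 2 * c)
    (hc : c < n) :
    ∫ θ in (0 : ℝ)..2 * π, cos (θ / 2) ^ a * sin (θ / 2) ^ b =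
      2 * π / n * ∑ j ∈ Finset.range n,
        cos (midpointNode n j / 2) ^ a * sin (midpointNode n j / 2) ^ b := by
  have hcomplex (θ : ℝ) : ((cos (θ / 2) ^ a * sin (θ / 2) ^ b : ℝ) : ℂ) =
      Complex.cos (θ / 2) ^ a * Complex.sin (θ / 2) ^ b := by push_cast; rfl
  have hdeg : ((.X + 1) ^ a * (.X - 1) ^ b : Polynomial ℂ).natDegree ≤ 2 * c := by
    rw [← habc]; compute_degree
  apply Complex.ofReal_injective
  apply mul_left_cancel₀ (by simp : (2 : ℂ) ^ a * (2 * Complex.I) ^ b ≠ 0)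
  rw [← intervalIntegral.integral_ofReal, ← intervalIntegral.integral_const_mul, Complex.ofReal_mul,
    mul_left_comm, Complex.ofReal_sum, Finset.mul_sum]
  simp_rw [hcomplex, cos_half_pow_mul_sin_half_pow_eq habc]
  rw [integral_exp_mul_eval_eq_midpoint _ hdeg hc]
  push_cast
  rfl

theorem sin_half_pos {θ : ℝ} (hθ : θ ∈ Set.Ioo 0 (2 * π)) : 0 < sin (θ / 2) :=
  sin_pos_of_pos_of_lt_pi (by linarith [hθ.1]) (by linarith [hθ.2])

theorem hasDerivAt_neg_cos_div_sin_half {θ : ℝ} (hθ : sin (θ / 2) ≠ 0) :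
    HasDerivAt (fun θ => -cos (θ / 2) / sin (θ / 2)) (1 / (2 * sin (θ / 2) ^ 2)) θ := by
  have hhalf : HasDerivAt (fun θ : ℝ => θ / 2) (1 / 2) θ := (hasDerivAt_id θ).div_const 2
  have hnum : HasDerivAt (fun θ => -cos (θ / 2)) (sin (θ / 2) * (1 / 2)) θ := by
    simpa using hhalf.cos.fun_neg
  refine (hnum.div hhalf.sin hθ).congr_deriv ?_
  field_simp
  linear_combination sin_sq_add_cos_sq (θ / 2)

theorem surjOn_neg_cos_div_sin_half :
    Set.SurjOn (fun θ => -cos (θ / 2) / sin (θ / 2)) (Set.Ioo 0 (2 * π)) Set.univ := by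
  intro x _
  refine ⟨2 * arctan x + π, ⟨?_, ?_⟩, ?_⟩
  · linarith [neg_pi_div_two_lt_arctan x]
  · linarith [arctan_lt_pi_div_two x]
  · simp only
    rw [show (2 * arctan x + π) / 2 = arctan x + π / 2 by ring, cos_add_pi_div_two,
      sin_add_pi_div_two, neg_neg, ← tan_eq_sin_div_cos, tan_arctan]

theorem integral_eq_setIntegral_neg_cos_div_sin_half {E : Type*} [NormedAddCommGroup E]
    [NormedSpace ℝ E] (g : ℝ → E) :
    ∫ x, g x = ∫ θ in Set.Ioo 0 (2 * π),
      (1 / (2 * sin (θ / 2) ^ 2)) • g (-cos (θ / 2) / sin (θ / 2)) := by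
  have hderiv : ∀ θ ∈ Set.Ioo 0 (2 * π), HasDerivAt (fun θ => -cos (θ / 2) / sin (θ / 2))
      (1 / (2 * sin (θ / 2) ^ 2)) θ :=
    fun θ hθ => hasDerivAt_neg_cos_div_sin_half (sin_half_pos hθ).ne'
  have hmono : MonotoneOn (fun θ => -cos (θ / 2) / sin (θ / 2)) (Set.Ioo 0 (2 * π)) := by
    refine monotoneOn_of_hasDerivWithinAt_nonneg (f' := fun θ => 1 / (2 * sin (θ / 2) ^ 2))
      (convex_Ioo _ _) (fun θ hθ => (hderiv θ hθ).continuousAt.continuousWithinAt)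
      (fun θ hθ => ?_) (fun θ _ => by positivity)
    rw [interior_Ioo] at hθ
    exact (hderiv θ hθ).hasDerivWithinAt
  rw [← setIntegral_univ, ← surjOn_neg_cos_div_sin_half.image_eq_of_mapsTo (Set.mapsTo_univ _ _)]
  exact integral_image_eq_integral_deriv_smul_of_monotoneOn measurableSet_Ioo
    (fun θ hθ => (hderiv θ hθ).hasDerivWithinAt) hmono g

theorem one_add_div_sq_rpow_neg_half {s c : ℝ} (hs : 0 < s) (hsc : s ^ 2 + c ^ 2 = 1) (υ : ℕ) :
    (1 + (c / s) ^ 2) ^ (-(υ : ℝ) / 2) = s ^ υ := by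
  have hinv : 1 + (c / s) ^ 2 = s ^ (-2 : ℝ) := by
    rw [rpow_neg hs.le, show (2 : ℝ) = (2 : ℕ) by norm_num, rpow_natCast]
    field_simp
    linear_combination hsc
  rw [hinv, ← rpow_mul hs.le, ← rpow_natCast]
  ring_nf

theorem weight_mul_deriv_neg_cos_div_sin_half {m υ : ℕ} (hmυ : m + 2 ≤ υ) {θ : ℝ}
    (hθ : 0 < sin (θ / 2)) :
    (-cos (θ / 2) / sin (θ / 2)) ^ m * (1 + (-cos (θ / 2) / sin (θ / 2)) ^ 2) ^ (-(υ : ℝ) / 2) *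
        (1 / (2 * sin (θ / 2) ^ 2)) =
      (-1) ^ m / 2 * (cos (θ / 2) ^ m * sin (θ / 2) ^ (υ - m - 2)) := by
  obtain ⟨k, rfl⟩ := Nat.exists_eq_add_of_le hmυ
  rw [neg_div, neg_sq, one_add_div_sq_rpow_neg_half hθ (sin_sq_add_cos_sq _),
    show m + 2 + k - m - 2 = k by omega, neg_pow, div_pow]
  field_simp
  ring

theorem stmt_9_general (n : ℕ) (υ : ℕ) (hυeven : Even υ) (hυpos : 0 < υ)
    (hυn : υ ≤ 2 * n) (m : ℕ) (hm : m ≤ υ - 2) :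
    (∫ x : ℝ, x ^ m * (1 + x ^ 2) ^ (-(υ : ℝ) / 2)) =
      (2 * π / n) * ∑ j ∈ Finset.range n,
        (-Real.cos ((2 * π * (j + 1) / n - π / n) / 2) /
            Real.sin ((2 * π * (j + 1) / n - π / n) / 2)) ^ m *
          (1 + (-Real.cos ((2 * π * (j + 1) / n - π / n) / 2) /
              Real.sin ((2 * π * (j + 1) / n - π / n) / 2)) ^ 2) ^ (-(υ : ℝ) / 2) *
          (1 / (2 * Real.sin ((2 * π * (j + 1) / n - π / n) / 2) ^ 2)) := by
  obtain ⟨c, rfl⟩ := hυeven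
  have hmυ : m + 2 ≤ c + c := by omega
  have hweight {θ : ℝ} (hθ : θ ∈ Set.Ioo 0 (2 * π)) :=
    weight_mul_deriv_neg_cos_div_sin_half hmυ (sin_half_pos hθ)
  rw [integral_eq_setIntegral_neg_cos_div_sin_half,
    setIntegral_congr_fun measurableSet_Ioo fun θ hθ => by rw [smul_eq_mul, mul_comm, hweight hθ],
    ← integral_Ioc_eq_integral_Ioo, ← intervalIntegral.integral_of_le two_pi_pos.le,
    intervalIntegral.integral_const_mul,
    integral_cos_half_pow_mul_sin_half_pow_eq_midpoint (n := n)
      (by omega : m + (c + c - m - 2) = 2 * (c - 1)) (by omega), mul_left_comm, Finset.mul_sum]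
  refine congrArg _ (Finset.sum_congr rfl fun j hj => ?_)
  exact (hweight (midpointNode_mem_Ioo (Finset.mem_range.mp hj))).symm

theorem stmt_9 (n : ℕ) (hn : 1 ≤ n) (υ : ℕ) (hυeven : Even υ) (hυpos : 0 < υ)
    (hυn : υ ≤ 2 * n) (m : ℕ) (hm : m ≤ υ - 2) :
    (∫ x : ℝ, x ^ m * (1 + x ^ 2) ^ (-(υ : ℝ) / 2)) =
      (2 * π / n) * ∑ j ∈ Finset.range n,
        (-Real.cos ((2 * π * (j + 1) / n - π / n) / 2) /
            Real.sin ((2 * π * (j + 1) / n - π / n) / 2)) ^ m *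
          (1 + (-Real.cos ((2 * π * (j + 1) / n - π / n) / 2) /
              Real.sin ((2 * π * (j + 1) / n - π / n) / 2)) ^ 2) ^ (-(υ : ℝ) / 2) *
          (1 / (2 * Real.sin ((2 * π * (j + 1) / n - π / n) / 2) ^ 2)) :=
  stmt_9_general n υ hυeven hυpos hυn m hm
end
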